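/- arXiv:1107.0994 — 2 statements merged into one kernel-verified Lean document; each statement's English description precedes it below -/
import Mathlib

section
/- The drop in mutual information caused by a projective measurement on B equals the measurement-dependent discord: I(A:B) − I(A':B') = S̃_{π}(A|B) − S(A|B), where ρ'_AB = Σ_j (I⊗π_j)ρ_AB(I⊗π_j) and S̃_{π}(A|B) = Σ_j p_j S(ρ_{A|j}). -/
open scoped BigOperators Kronecker ComplexOrder
open Matrix

noncomputable section

/-- `-(x log₂ x)`, the summand of Shannon entropy. -/
def negxlog (x : ℝ) : ℝ := -(x * Real.logb 2 x)

/-- Von Neumann entropy (base-2) of a matrix, via the eigenvalues of a Hermitian matrix. -/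
def vnEntropy {n : Type*} [Fintype n] [DecidableEq n] (ρ : Matrix n n ℂ) : ℝ :=
  if h : ρ.IsHermitian then ∑ i, negxlog (h.eigenvalues i) else 0

/-- A density operator: positive semidefinite with unit trace. -/
def IsDensity {n : Type*} [Fintype n] [DecidableEq n] (ρ : Matrix n n ℂ) : Prop :=
  ρ.PosSemidef ∧ ρ.trace = 1

/-- Partial trace over the second factor. -/
def trB {α β : Type*} [Fintype β] (ρ : Matrix (α × β) (α × β) ℂ) : Matrix α α ℂ :=
  fun i j => ∑ k, ρ (i, k) (j, k)

/-- Partial trace over the first factor. -/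
def trA {α β : Type*} [Fintype α] (ρ : Matrix (α × β) (α × β) ℂ) : Matrix β β ℂ :=
  fun i j => ∑ k, ρ (k, i) (k, j)

/-- Partial trace over the third factor of a tripartite system `α × (β × γ)`. -/
def trC3 {α β γ : Type*} [Fintype γ] (ρ : Matrix (α × β × γ) (α × β × γ) ℂ) :
    Matrix (α × β) (α × β) ℂ :=
  fun i j => ∑ k, ρ (i.1, (i.2, k)) (j.1, (j.2, k))

/-- Partial trace over the second factor of a tripartite system `α × (β × γ)`. -/
def trB3 {α β γ : Type*} [Fintype β] (ρ : Matrix (α × β × γ) (α × β × γ) ℂ) :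
    Matrix (α × γ) (α × γ) ℂ :=
  fun i j => ∑ k, ρ (i.1, (k, i.2)) (j.1, (k, j.2))

/-- Partial trace over the first and third factors of a tripartite system `α × (β × γ)`. -/
def trAC3 {α β γ : Type*} [Fintype α] [Fintype γ] (ρ : Matrix (α × β × γ) (α × β × γ) ℂ) :
    Matrix β β ℂ :=
  fun i j => ∑ k : α, ∑ l : γ, ρ (k, (i, l)) (k, (j, l))

/-- A family of vectors is orthonormal. -/
def OrthonormalFam {ι β : Type*} [Fintype β] [DecidableEq ι] (e : ι → β → ℂ) : Prop :=
  ∀ i j, (∑ x, (starRingEnd ℂ) (e i x) * e j x) = if i = j then 1 else 0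

/-- The rank-one operator `|v⟩⟨v|`. -/
def projKet {β : Type*} (v : β → ℂ) : Matrix β β ℂ :=
  Matrix.vecMulVec v (star v)

/-- An orthonormal basis of `β`: an orthonormal family which is complete. -/
def IsONB {β : Type*} [Fintype β] [DecidableEq β] (e : β → β → ℂ) : Prop :=
  OrthonormalFam e ∧ (∑ j, projKet (e j)) = 1

/-- The operator `(I_A ⊗ ⟨v|) ρ (I_A ⊗ |w⟩)` on `A`. -/
def condOp2 {α β : Type*} [Fintype α] [Fintype β]
    (ρ : Matrix (α × β) (α × β) ℂ) (v w : β → ℂ) : Matrix α α ℂ :=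
  fun i j => ∑ x, ∑ y, (starRingEnd ℂ) (v x) * ρ (i, x) (j, y) * w y

/-- The unnormalized conditional operator `(I_A ⊗ ⟨v|) ρ (I_A ⊗ |v⟩)`. -/
def condOp {α β : Type*} [Fintype α] [Fintype β]
    (ρ : Matrix (α × β) (α × β) ℂ) (v : β → ℂ) : Matrix α α ℂ :=
  condOp2 ρ v v

/-- Outcome probability `p = Tr(ρ (I ⊗ |v⟩⟨v|))`. -/
def prob {α β : Type*} [Fintype α] [Fintype β]
    (ρ : Matrix (α × β) (α × β) ℂ) (v : β → ℂ) : ℝ :=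
  (Matrix.trace (condOp ρ v)).re

/-- Normalized conditional state `ρ_{A|v}`. -/
def condState {α β : Type*} [Fintype α] [Fintype β]
    (ρ : Matrix (α × β) (α × β) ℂ) (v : β → ℂ) : Matrix α α ℂ :=
  (prob ρ v)⁻¹ • condOp ρ v

/-- Measured (average) conditional entropy `Σ_i p_i S(ρ_{A|i})` for rank-one elements `|v i⟩⟨v i|`. -/
def measCondEnt {α β ι : Type*} [Fintype α] [Fintype β] [DecidableEq α]
    [Fintype ι] (ρ : Matrix (α × β) (α × β) ℂ) (v : ι → β → ℂ) : ℝ :=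
  ∑ i, prob ρ (v i) * vnEntropy (condState ρ (v i))

/-- Quantum conditional entropy `S(A|B) = S(ρ_AB) - S(ρ_B)`. -/
def condEnt {α β : Type*} [Fintype α] [Fintype β] [DecidableEq α] [DecidableEq β]
    (ρ : Matrix (α × β) (α × β) ℂ) : ℝ :=
  vnEntropy ρ - vnEntropy (trA ρ)

/-- Quantum mutual information `I(A:B) = S(ρ_A) + S(ρ_B) - S(ρ_AB)`. -/
def mutualInfo {α β : Type*} [Fintype α] [Fintype β] [DecidableEq α] [DecidableEq β]
    (ρ : Matrix (α × β) (α × β) ℂ) : ℝ :=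
  vnEntropy (trB ρ) + vnEntropy (trA ρ) - vnEntropy ρ

/-- Quantum discord `D(A:B) = inf over rank-1 POVMs of S̃(A|B) - S(A|B)`. -/
def discord (α β : Type*) [Fintype α] [Fintype β] [DecidableEq α] [DecidableEq β]
    (ρ : Matrix (α × β) (α × β) ℂ) : ℝ :=
  sInf { r : ℝ | ∃ (n : ℕ) (v : Fin n → β → ℂ),
      (∑ i, projKet (v i)) = 1 ∧ r = measCondEnt ρ v } - condEnt ρ

/-- A POVM: positive semidefinite elements summing to the identity. -/
def IsPOVM {β ι : Type*} [Fintype β] [DecidableEq β] [Fintype ι]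
    (M : ι → Matrix β β ℂ) : Prop :=
  (∀ i, (M i).PosSemidef) ∧ (∑ i, M i) = 1

/-- Outcome probability for a general POVM element. -/
def povmProb {α β : Type*} [Fintype α] [Fintype β] [DecidableEq α] [DecidableEq β]
    (ρ : Matrix (α × β) (α × β) ℂ) (M : Matrix β β ℂ) : ℝ :=
  (Matrix.trace (trB (ρ * ((1 : Matrix α α ℂ) ⊗ₖ M)))).re

/-- Normalized conditional state for a general POVM element. -/
def povmCondState {α β : Type*} [Fintype α] [Fintype β] [DecidableEq α] [DecidableEq β]
    (ρ : Matrix (α × β) (α × β) ℂ) (M : Matrix β β ℂ) : Matrix α α ℂ :=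
  (povmProb ρ M)⁻¹ • trB (ρ * ((1 : Matrix α α ℂ) ⊗ₖ M))

/-- Measured conditional entropy for a general POVM. -/
def povmMCE {α β ι : Type*} [Fintype α] [Fintype β] [DecidableEq α] [DecidableEq β]
    [Fintype ι] (ρ : Matrix (α × β) (α × β) ℂ) (M : ι → Matrix β β ℂ) : ℝ :=
  ∑ i, povmProb ρ (M i) * vnEntropy (povmCondState ρ (M i))

end

/-! Let `W` be the unitary whose columns are the basis vectors `e j`. The measured state is
`ρ' = (I ⊗ W) (⊕ⱼ σⱼ) (I ⊗ W)†` with `σⱼ = pⱼ ρ_{A|j}` the unnormalized conditional states, so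
`S(ρ') = Σⱼ S(σⱼ) = Σⱼ pⱼ S(ρ_{A|j}) + H(p)` by the grouping property of `-x log x`.
A unitary acting on `B` alone does not change the `A`-marginal, so `ρ'_A = ρ_A`, while
`ρ'_B = W diag(p) W†` has entropy `H(p)`. The two `H(p)` terms cancel in `I(A':B')`.
Since entropy depends only on the spectrum, all spectra are compared through characteristic
polynomials. -/

namespace Matrix

open Polynomial

variable {n R : Type*} [Fintype n] [DecidableEq n] [CommRing R]

theorem charpoly_mul_mul_of_mul_eq_one {A U V : Matrix n n R} (h : V * U = 1) :
    (U * A * V).charpoly = A.charpoly := by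
  rw [charpoly_mul_comm, ← Matrix.mul_assoc, h, Matrix.one_mul]

theorem charmatrix_blockDiagonal {o : Type*} [Fintype o] [DecidableEq o]
    (M : o → Matrix n n R) :
    charmatrix (blockDiagonal M) = blockDiagonal fun k => charmatrix (M k) := by
  refine Matrix.ext fun ⟨i, k⟩ ⟨j, k'⟩ => ?_
  by_cases hk : k = k'
  · subst hk
    by_cases hij : i = j
    · subst hij; simp
    · simp [hij]
  · simp [blockDiagonal_apply_ne, hk]

theorem charpoly_blockDiagonal {o : Type*} [Fintype o] [DecidableEq o] (M : o → Matrix n n R) :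
    (blockDiagonal M).charpoly = ∏ k, (M k).charpoly := by
  rw [charpoly, charmatrix_blockDiagonal, det_blockDiagonal]
  rfl

end Matrix

section Entropy

open Polynomial

variable {n : Type*} [Fintype n] [DecidableEq n]

theorem vnEntropy_eq_of_charpoly_eq {ι : Type*} [Fintype ι] {A : Matrix n n ℂ}
    (hA : A.IsHermitian) {d : ι → ℝ} (h : A.charpoly = ∏ i, (X - C (d i : ℂ))) :
    vnEntropy A = ∑ i, negxlog (d i) := by
  have hroots : (Finset.univ.val.map hA.eigenvalues).map (RCLike.ofReal : ℝ → ℂ) =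
      (Finset.univ.val.map d).map (RCLike.ofReal : ℝ → ℂ) := by
    rw [Multiset.map_map, Multiset.map_map, ← hA.roots_charpoly_eq_eigenvalues, h,
      roots_prod _ _ (by simp [Finset.prod_ne_zero_iff, X_sub_C_ne_zero])]
    simp
  have := congrArg (fun s => (s.map negxlog).sum)
    (Multiset.map_injective Complex.ofReal_injective hroots)
  simpa [vnEntropy, hA] using this

theorem vnEntropy_diagonal (d : n → ℝ) :
    vnEntropy (diagonal fun i => (d i : ℂ)) = ∑ i, negxlog (d i) :=
  vnEntropy_eq_of_charpoly_eq (isHermitian_diagonal_of_self_adjoint _ (by ext; simp))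
    (charpoly_diagonal _)

theorem vnEntropy_mul_mul_conjTranspose {A U : Matrix n n ℂ} (hA : A.IsHermitian)
    (hU : Uᴴ * U = 1) : vnEntropy (U * A * Uᴴ) = vnEntropy A := by
  rw [vnEntropy_eq_of_charpoly_eq (d := hA.eigenvalues)
    (isHermitian_mul_mul_conjTranspose U hA)
    ((charpoly_mul_mul_of_mul_eq_one hU).trans hA.charpoly_eq), vnEntropy, dif_pos hA]

theorem vnEntropy_blockDiagonal {o : Type*} [Fintype o] [DecidableEq o]
    {M : o → Matrix n n ℂ} (hM : ∀ k, (M k).IsHermitian) :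
    vnEntropy (blockDiagonal M) = ∑ k, vnEntropy (M k) := by
  have h : (blockDiagonal M).charpoly =
      ∏ p : n × o, (X - C ((hM p.2).eigenvalues p.1 : ℂ)) := by
    rw [charpoly_blockDiagonal, Fintype.prod_prod_type, Finset.prod_comm]
    exact Finset.prod_congr rfl fun k _ => (hM k).charpoly_eq
  rw [vnEntropy_eq_of_charpoly_eq (isHermitian_blockDiagonal_iff.mpr hM) h,
    Fintype.sum_prod_type, Finset.sum_comm]
  exact Finset.sum_congr rfl fun k _ => by rw [vnEntropy, dif_pos (hM k)]

theorem vnEntropy_smul {A : Matrix n n ℂ} (hA : A.IsHermitian) (r : ℝ) :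
    vnEntropy (r • A) = ∑ i, negxlog (r * hA.eigenvalues i) := by
  rw [← cfc_const_mul_id r A hA]
  exact vnEntropy_eq_of_charpoly_eq (cfc_predicate _ A) (hA.charpoly_cfc_eq _)

end Entropy

theorem negxlog_mul (p m : ℝ) : negxlog (p * m) = p * negxlog m + m * negxlog p := by
  rcases eq_or_ne p 0 with rfl | hp
  · simp [negxlog]
  rcases eq_or_ne m 0 with rfl | hm
  · simp [negxlog]
  simp only [negxlog, Real.logb_mul hp hm]
  ring

theorem sum_negxlog_eq_mul_sum_negxlog_inv_mul_add {ι : Type*} [Fintype ι] {l : ι → ℝ}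
    (hl : ∀ i, 0 ≤ l i) :
    ∑ i, negxlog (l i) =
      (∑ i, l i) * ∑ i, negxlog ((∑ i, l i)⁻¹ * l i) + negxlog (∑ i, l i) := by
  set p := ∑ i, l i with hp_def
  rcases eq_or_ne p 0 with hp | hp
  · have hl0 : ∀ i, l i = 0 := fun i =>
      (Finset.sum_eq_zero_iff_of_nonneg fun i _ => hl i).mp hp i (Finset.mem_univ i)
    simp [hl0, hp, negxlog]
  calc ∑ i, negxlog (l i) = ∑ i, negxlog (p * (p⁻¹ * l i)) := by
        simp only [mul_inv_cancel_left₀ hp]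
    _ = p * ∑ i, negxlog (p⁻¹ * l i) + (p⁻¹ * p) * negxlog p := by
        simp only [negxlog_mul p, Finset.sum_add_distrib, ← Finset.mul_sum, ← Finset.sum_mul,
          ← hp_def]
    _ = p * ∑ i, negxlog (p⁻¹ * l i) + negxlog p := by rw [inv_mul_cancel₀ hp, one_mul]

section ConditionalStates

variable {α β : Type*} [Fintype α] [Fintype β]

theorem sum_condOp_eq_trB {ι : Type*} [Fintype ι] [DecidableEq β] {ρ : Matrix (α × β) (α × β) ℂ}
    {e : ι → β → ℂ} (he : ∑ j, projKet (e j) = 1) : ∑ j, condOp ρ (e j) = trB ρ := by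
  have hcompl (x y : β) : ∑ j, star (e j x) * e j y = if y = x then 1 else 0 := by
    have := congrFun (congrFun he y) x
    simp only [Matrix.sum_apply, projKet, vecMulVec_apply, Pi.star_apply, one_apply] at this
    simpa only [mul_comm] using this
  ext i j
  simp only [Matrix.sum_apply, condOp, condOp2, trB, starRingEnd_apply]
  rw [Finset.sum_comm]
  refine Finset.sum_congr rfl fun x _ => ?_
  rw [Finset.sum_comm]
  simp only [mul_right_comm _ (ρ _ _), ← Finset.sum_mul, hcompl, ite_mul, one_mul, zero_mul,
    Finset.sum_ite_eq', Finset.mem_univ, if_true]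

variable [DecidableEq α]

/-- The matrix on the right is `I_A ⊗ |v⟩`. -/
theorem condOp_eq_conjTranspose_mul_mul (ρ : Matrix (α × β) (α × β) ℂ) (v : β → ℂ) :
    condOp ρ v = (of fun (p : α × β) j => if p.1 = j then v p.2 else 0)ᴴ * ρ *
      of fun (p : α × β) j => if p.1 = j then v p.2 else 0 := by
  ext i j
  simp only [condOp, condOp2, mul_apply, conjTranspose_apply, of_apply, Fintype.sum_prod_type,
    apply_ite star, star_zero, ite_mul, mul_ite, zero_mul, mul_zero, Finset.sum_mul,
    starRingEnd_apply]
  rw [Finset.sum_comm]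
  simp only [Finset.sum_ite_irrel, Finset.sum_const_zero, Finset.sum_ite_eq', Finset.mem_univ,
    if_true]

theorem Matrix.PosSemidef.condOp {ρ : Matrix (α × β) (α × β) ℂ} (hρ : ρ.PosSemidef)
    (v : β → ℂ) : (condOp ρ v).PosSemidef := by
  rw [condOp_eq_conjTranspose_mul_mul]
  exact hρ.conjTranspose_mul_mul_same _

variable {ρ : Matrix (α × β) (α × β) ℂ}

theorem prob_eq_sum_eigenvalues (hρ : ρ.PosSemidef) (v : β → ℂ) :
    prob ρ v = ∑ a, (hρ.condOp v).isHermitian.eigenvalues a := by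
  simp [prob, (hρ.condOp v).isHermitian.trace_eq_sum_eigenvalues]

theorem trace_condOp (hρ : ρ.PosSemidef) (v : β → ℂ) : (condOp ρ v).trace = prob ρ v := by
  rw [(hρ.condOp v).isHermitian.trace_eq_sum_eigenvalues, prob_eq_sum_eigenvalues hρ]
  push_cast
  rfl

theorem vnEntropy_condOp (hρ : ρ.PosSemidef) (v : β → ℂ) :
    vnEntropy (condOp ρ v) = prob ρ v * vnEntropy (condState ρ v) + negxlog (prob ρ v) := by
  rw [vnEntropy, dif_pos (hρ.condOp v).isHermitian, condState,
    vnEntropy_smul (hρ.condOp v).isHermitian, prob_eq_sum_eigenvalues hρ]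
  exact sum_negxlog_eq_mul_sum_negxlog_inv_mul_add (hρ.condOp v).eigenvalues_nonneg

end ConditionalStates

section PartialTrace

variable {α β γ : Type*}

theorem trA_one_kronecker_mul_mul [Fintype α] [Fintype γ] [DecidableEq α] (W : Matrix β γ ℂ)
    (X : Matrix (α × γ) (α × γ) ℂ) :
    trA (((1 : Matrix α α ℂ) ⊗ₖ W) * X * ((1 : Matrix α α ℂ) ⊗ₖ W)ᴴ) = W * trA X * Wᴴ := by
  ext x y
  simp only [trA, mul_apply, conjTranspose_apply, kroneckerMap_apply, one_apply,
    Fintype.sum_prod_type, ite_mul, one_mul, zero_mul, apply_ite star, star_zero, mul_ite,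
    mul_zero, Finset.sum_ite_eq, Finset.sum_ite_irrel, Finset.sum_const_zero, Finset.mem_univ,
    if_true]
  rw [Finset.sum_comm]
  refine Finset.sum_congr rfl fun k _ => ?_
  simp only [← Finset.sum_mul, Finset.mul_sum]
  rw [Finset.sum_comm]

theorem trB_one_kronecker_mul_mul [Fintype α] [Fintype β] [Fintype γ] [DecidableEq α]
    [DecidableEq γ] {W : Matrix β γ ℂ} (hW : Wᴴ * W = 1) (X : Matrix (α × γ) (α × γ) ℂ) :
    trB (((1 : Matrix α α ℂ) ⊗ₖ W) * X * ((1 : Matrix α α ℂ) ⊗ₖ W)ᴴ) = trB X := by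
  ext i j
  simp only [trB, mul_apply, conjTranspose_apply, kroneckerMap_apply, one_apply,
    Fintype.sum_prod_type, ite_mul, one_mul, zero_mul, apply_ite star, star_zero, mul_ite,
    mul_zero, Finset.sum_ite_eq, Finset.sum_ite_irrel, Finset.sum_const_zero, Finset.mem_univ,
    if_true]
  have hW' (k k' : γ) : ∑ x, star (W x k') * W x k = if k' = k then 1 else 0 := by
    simpa [mul_apply, one_apply] using congrFun (congrFun hW k') k
  calc ∑ x, ∑ k', (∑ k, W x k * X (i, k) (j, k')) * star (W x k')
      = ∑ k, ∑ k', (∑ x, star (W x k') * W x k) * X (i, k) (j, k') := by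
        simp only [Finset.sum_mul]
        rw [Finset.sum_comm_cycle]
        refine Finset.sum_congr rfl fun k _ => ?_
        rw [Finset.sum_comm]
        exact Finset.sum_congr rfl fun k' _ => Finset.sum_congr rfl fun x _ => by ring
    _ = ∑ k, X (i, k) (j, k) := by
        simp only [hW', ite_mul, one_mul, zero_mul, Finset.sum_ite_eq', Finset.mem_univ, if_true]

theorem trA_blockDiagonal [Fintype α] [DecidableEq γ] (M : γ → Matrix α α ℂ) :
    trA (blockDiagonal M) = diagonal fun k => (M k).trace := by
  ext x y
  by_cases h : x = y
  · subst h; simp [trA, trace]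
  · simp [trA, blockDiagonal_apply_ne, diagonal_apply_ne, h]

theorem trB_blockDiagonal [Fintype γ] [DecidableEq γ] (M : γ → Matrix α α ℂ) :
    trB (blockDiagonal M) = ∑ k, M k := by
  ext i j
  simp [trB, Matrix.sum_apply]

end PartialTrace

section Dephasing

variable {α β ι : Type*} [Fintype ι]

theorem one_kronecker_projKet_mul_mul_apply [Fintype α] [Fintype β] [DecidableEq α]
    (ρ : Matrix (α × β) (α × β) ℂ) (v : β → ℂ) (i j : α) (x y : β) :
    (((1 : Matrix α α ℂ) ⊗ₖ projKet v) * ρ * ((1 : Matrix α α ℂ) ⊗ₖ projKet v)) (i, x) (j, y) =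
      v x * condOp ρ v i j * star (v y) := by
  simp only [mul_apply, kroneckerMap_apply, one_apply, projKet, vecMulVec_apply, Pi.star_apply,
    Fintype.sum_prod_type, ite_mul, one_mul, zero_mul, mul_ite, mul_zero, Finset.sum_ite_eq,
    Finset.sum_ite_irrel, Finset.sum_const_zero, Finset.sum_ite_eq', Finset.mem_univ, if_true,
    condOp, condOp2, starRingEnd_apply]
  simp only [Finset.mul_sum, Finset.sum_mul]
  rw [Finset.sum_comm]
  exact Finset.sum_congr rfl fun _ _ => Finset.sum_congr rfl fun _ _ => by ring

theorem sum_one_kronecker_projKet_mul_mul [Fintype α] [Fintype β] [DecidableEq α] [DecidableEq ι]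
    (ρ : Matrix (α × β) (α × β) ℂ) (e : ι → β → ℂ) :
    ∑ j, ((1 : Matrix α α ℂ) ⊗ₖ projKet (e j)) * ρ * ((1 : Matrix α α ℂ) ⊗ₖ projKet (e j)) =
      ((1 : Matrix α α ℂ) ⊗ₖ of fun x j => e j x) * blockDiagonal (fun j => condOp ρ (e j)) *
        ((1 : Matrix α α ℂ) ⊗ₖ of fun x j => e j x)ᴴ := by
  ext ⟨i, x⟩ ⟨j, y⟩
  rw [Matrix.sum_apply]
  simp only [one_kronecker_projKet_mul_mul_apply]
  simp only [mul_apply, kroneckerMap_apply, one_apply, conjTranspose_apply, of_apply,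
    blockDiagonal_apply, Fintype.sum_prod_type, ite_mul, one_mul, zero_mul, mul_ite, mul_zero,
    apply_ite star, star_zero, Finset.sum_ite_eq, Finset.sum_ite_irrel, Finset.sum_const_zero,
    Finset.sum_ite_eq', Finset.mem_univ, if_true]

theorem of_mul_conjTranspose_of (e : ι → β → ℂ) :
    (of fun x j => e j x) * (of fun x j => e j x)ᴴ = ∑ j, projKet (e j) := by
  ext x y
  simp [mul_apply, projKet, vecMulVec_apply, Matrix.sum_apply]

end Dephasing

/-- the drop in mutual information equals the measurement-dependent discord. -/
theorem mutualInfo_drop_eq_measured_discord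
    {α β : Type*} [Fintype α] [Fintype β] [DecidableEq α] [DecidableEq β]
    (ρ : Matrix (α × β) (α × β) ℂ) (hρ : IsDensity ρ)
    (e : β → β → ℂ) (he : IsONB e)
    (ρ' : Matrix (α × β) (α × β) ℂ)
    (hρ' : ρ' = ∑ j, ((1 : Matrix α α ℂ) ⊗ₖ projKet (e j)) * ρ *
        ((1 : Matrix α α ℂ) ⊗ₖ projKet (e j))) :
    mutualInfo ρ - mutualInfo ρ' = measCondEnt ρ e - condEnt ρ := by
  set W : Matrix β β ℂ := of fun x j => e j x
  have hW : Wᴴ * W = 1 := mul_eq_one_comm.mp ((of_mul_conjTranspose_of e).trans he.2)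
  have hV : ((1 : Matrix α α ℂ) ⊗ₖ W)ᴴ * ((1 : Matrix α α ℂ) ⊗ₖ W) = 1 := by
    rw [conjTranspose_kronecker, conjTranspose_one, ← mul_kronecker_mul, Matrix.one_mul, hW,
      one_kronecker_one]
  have hblocks (j : β) : (condOp ρ (e j)).IsHermitian := (hρ.1.condOp _).isHermitian
  rw [sum_one_kronecker_projKet_mul_mul] at hρ'
  have hSAB : vnEntropy ρ' = ∑ j, (prob ρ (e j) * vnEntropy (condState ρ (e j)) +
      negxlog (prob ρ (e j))) := by
    rw [hρ', vnEntropy_mul_mul_conjTranspose (isHermitian_blockDiagonal_iff.mpr hblocks) hV,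
      vnEntropy_blockDiagonal hblocks]
    simp only [vnEntropy_condOp hρ.1]
  have hSB : vnEntropy (trA ρ') = ∑ j, negxlog (prob ρ (e j)) := by
    rw [hρ', trA_one_kronecker_mul_mul, trA_blockDiagonal]
    simp only [trace_condOp hρ.1]
    rw [vnEntropy_mul_mul_conjTranspose
      (isHermitian_diagonal_of_self_adjoint _ (by ext; simp)) hW, vnEntropy_diagonal]
  have hA : trB ρ' = trB ρ := by
    rw [hρ', trB_one_kronecker_mul_mul hW, trB_blockDiagonal, sum_condOp_eq_trB he.2]
  rw [mutualInfo, mutualInfo, hA, hSB, hSAB, condEnt, measCondEnt, Finset.sum_add_distrib]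
  ring
end

section
/- The measured conditional entropy Σ_i p_i S(ρ_{A|i}) is a concave function of the POVM on B (viewed as a point of the convex set of POVMs with a fixed outcome set); hence its minimum over all POVMs is attained at an extreme point of that set. -/
open scoped BigOperators Kronecker ComplexOrder
open Matrix

noncomputable section

/-!
Put `X_i = Tr_B(ρ (I ⊗ M_i))`, which is linear in the POVM and positive semidefinite. The
measured conditional entropy is `∑ i, Tr X_i · S(X_i / Tr X_i)`, a sum of perspectives of the von
Neumann entropy `S`. `S` is concave on positive semidefinite matrices (Jensen's inequality in the
eigenbasis of a mixture, the overlaps `|⟨u_k, v_j⟩|²` forming a doubly stochastic matrix), and the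
perspective of a concave function on a cone is concave; hence `S̃` is concave on the convex set of
POVMs. That set is compact, and `S̃` is continuous on it because there
`Tr X · S(X / Tr X) = S(X) - negxlog (Tr X)`. So the minimisers of `S̃` form a nonempty compact
face, which by Krein–Milman has an extreme point, and an extreme point of a face is an extreme
point of the whole set.
-/

open Matrix

lemma ConcaveOn.sum {𝕜 E β ι : Type*} [Semiring 𝕜] [PartialOrder 𝕜] [AddCommMonoid E]
    [AddCommMonoid β] [PartialOrder β] [IsOrderedAddMonoid β] [SMul 𝕜 E] [DistribMulAction 𝕜 β]
    {s : Set E} {t : Finset ι} {f : ι → E → β} (hs : Convex 𝕜 s)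
    (hf : ∀ i ∈ t, ConcaveOn 𝕜 s (f i)) : ConcaveOn 𝕜 s (fun x => ∑ i ∈ t, f i x) :=
  ⟨hs, fun _ hx _ hy _ _ ha hb hab => by
    simp only [Finset.smul_sum, ← Finset.sum_add_distrib]
    exact Finset.sum_le_sum fun i hi => (hf i hi).2 hx hy ha hb hab⟩

theorem ConcaveOn.exists_mem_extremePoints_isMinOn {E : Type*} [AddCommGroup E] [Module ℝ E]
    [TopologicalSpace E] [T2Space E] [IsTopologicalAddGroup E] [ContinuousSMul ℝ E]
    [LocallyConvexSpace ℝ E] {s : Set E} {f : E → ℝ} (hf : ConcaveOn ℝ s f)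
    (hfc : ContinuousOn f s) (hs : IsCompact s) (hne : s.Nonempty) :
    ∃ x ∈ Set.extremePoints ℝ s, IsMinOn f s x := by
  obtain ⟨x₀, hx₀, hmin⟩ := hs.exists_isMinOn hne hfc
  set T := s ∩ f ⁻¹' Set.Iic (f x₀)
  have hT : IsCompact T := hs.of_isClosed_subset
    (hfc.preimage_isClosed_of_isClosed hs.isClosed isClosed_Iic) Set.inter_subset_left
  have hext : IsExtreme ℝ s T := by
    refine ⟨Set.inter_subset_left, fun x hx y hy z hz hzxy => ⟨hx, ?_⟩⟩
    obtain ⟨a, b, ha, hb, hab, rfl⟩ := hzxy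
    have hconc : a * f x + b * f y ≤ f x₀ := (hf.2 hx hy ha.le hb.le hab).trans hz.2
    have hfy : b * f x₀ ≤ b * f y := mul_le_mul_of_nonneg_left (hmin hy) hb.le
    have hsplit : f x₀ = a * f x₀ + b * f x₀ := by rw [← add_mul, hab, one_mul]
    show f x ≤ f x₀
    nlinarith
  obtain ⟨x, hx⟩ := hT.extremePoints_nonempty ⟨x₀, hx₀, show f x₀ ≤ f x₀ from le_rfl⟩
  have hfx : f x ≤ f x₀ := (extremePoints_subset hx).2
  exact ⟨x, hext.extremePoints_subset_extremePoints hx, fun y hy => hfx.trans (hmin hy)⟩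

section Perspective

variable {E : Type*} [AddCommGroup E] [Module ℝ E]

/-- Since `0⁻¹ = 0`, `perspective φ F x = 0` whenever `φ x = 0`. -/
noncomputable def perspective (φ : E →ₗ[ℝ] ℝ) (F : E → ℝ) (x : E) : ℝ := φ x * F ((φ x)⁻¹ • x)

lemma concaveOn_perspective {s : Set E} {F : E → ℝ} (hF : ConcaveOn ℝ s F) (φ : E →ₗ[ℝ] ℝ)
    (hs : ∀ x ∈ s, ∀ c : ℝ, 0 ≤ c → c • x ∈ s) (hφ : ∀ x ∈ s, 0 ≤ φ x)
    (hφ0 : ∀ x ∈ s, φ x = 0 → x = 0) : ConcaveOn ℝ s (perspective φ F) := by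
  refine ⟨hF.1, fun x hx y hy a b ha hb hab => ?_⟩
  have hx0 := mul_nonneg ha (hφ x hx)
  have hy0 := mul_nonneg hb (hφ y hy)
  have hφxy : φ (a • x + b • y) = a * φ x + b * φ y := by simp
  rcases (add_nonneg hx0 hy0).eq_or_lt with hc | hc
  · have hx' : a * φ x = 0 := by linarith
    have hy' : b * φ y = 0 := by linarith
    simp only [perspective, smul_eq_mul, hφxy, ← mul_assoc, hx', hy']
    simp
  have hunscale : ∀ z ∈ s, φ z • (φ z)⁻¹ • z = z := fun z hz => by
    rcases eq_or_ne (φ z) 0 with h | h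
    · simp [hφ0 z hz h]
    · rw [smul_smul, mul_inv_cancel₀ h, one_smul]
  set c := a * φ x + b * φ y
  -- normalising the mixture mixes the normalised points with weights `a φ x / c`, `b φ y / c`
  have hmix : c⁻¹ • (a • x + b • y)
      = (c⁻¹ * (a * φ x)) • ((φ x)⁻¹ • x) + (c⁻¹ * (b * φ y)) • ((φ y)⁻¹ • y) := by
    conv_lhs => rw [← hunscale x hx, ← hunscale y hy]
    simp only [smul_add, smul_smul, mul_assoc]
  have hconc := hF.2 (hs x hx _ (inv_nonneg.2 (hφ x hx))) (hs y hy _ (inv_nonneg.2 (hφ y hy)))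
    (mul_nonneg (inv_nonneg.2 hc.le) hx0) (mul_nonneg (inv_nonneg.2 hc.le) hy0)
    (by rw [← mul_add, inv_mul_cancel₀ hc.ne'])
  calc a • perspective φ F x + b • perspective φ F y
      = c * ((c⁻¹ * (a * φ x)) • F ((φ x)⁻¹ • x) + (c⁻¹ * (b * φ y)) • F ((φ y)⁻¹ • y)) := by
        simp only [perspective, smul_eq_mul]
        field_simp
    _ ≤ c * F (c⁻¹ • (a • x + b • y)) := by
        rw [hmix]
        exact mul_le_mul_of_nonneg_left hconc hc.le
    _ = perspective φ F (a • x + b • y) := by rw [perspective, hφxy]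

end Perspective

lemma negxlog_eq_smul_negMulLog : negxlog = fun x => (Real.log 2)⁻¹ • Real.negMulLog x := by
  funext x
  simp only [negxlog, Real.negMulLog, Real.logb, smul_eq_mul]
  ring

lemma concaveOn_negxlog : ConcaveOn ℝ (Set.Ici 0) negxlog := by
  rw [negxlog_eq_smul_negMulLog]
  exact Real.concaveOn_negMulLog.smul (by positivity)

lemma continuous_negxlog : Continuous negxlog := by
  rw [negxlog_eq_smul_negMulLog]
  exact Real.continuous_negMulLog.const_smul (Real.log 2)⁻¹

lemma mul_negxlog_inv_mul {p : ℝ} (hp : 0 < p) (x : ℝ) :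
    p * negxlog (p⁻¹ * x) = negxlog x + Real.logb 2 p * x := by
  rcases eq_or_ne x 0 with rfl | hx
  · simp [negxlog]
  · rw [negxlog, negxlog, Real.logb_mul (inv_ne_zero hp.ne') hx, Real.logb_inv]
    field_simp
    ring

section PosSemidef

variable {n : Type*}

lemma convex_setOf_posSemidef : Convex ℝ {A : Matrix n n ℂ | A.PosSemidef} :=
  fun _ hA _ hB _ _ ha hb _ => (hA.smul ha).add (hB.smul hb)

lemma Matrix.PosSemidef.re_apply_self_nonneg {A : Matrix n n ℂ} (hA : A.PosSemidef) (k : n) :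
    0 ≤ (A k k).re :=
  (Complex.nonneg_iff.mp hA.diag_nonneg).1

variable [Fintype n]

lemma Matrix.PosSemidef.re_trace_nonneg {A : Matrix n n ℂ} (hA : A.PosSemidef) :
    0 ≤ A.trace.re :=
  (Complex.nonneg_iff.mp hA.trace_nonneg).1

lemma Matrix.PosSemidef.eq_zero_of_re_trace_eq_zero {A : Matrix n n ℂ} (hA : A.PosSemidef)
    (h : A.trace.re = 0) : A = 0 :=
  hA.trace_eq_zero_iff.mp (Complex.ext h (Complex.nonneg_iff.mp hA.trace_nonneg).2.symm)

end PosSemidef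

noncomputable def reTrace (n : Type*) [Fintype n] : Matrix n n ℂ →ₗ[ℝ] ℝ :=
  Complex.reLm.comp (traceLinearMap n ℝ ℂ)

lemma reTrace_apply {n : Type*} [Fintype n] (A : Matrix n n ℂ) : reTrace n A = A.trace.re :=
  rfl

section Unitary

variable {n : Type*} [Fintype n] [DecidableEq n]

lemma re_star_mul_diagonal_mul_apply_self (V : Matrix n n ℂ) (d : n → ℝ) (k : n) :
    ((star V * diagonal (RCLike.ofReal ∘ d : n → ℂ) * V) k k).re
      = ∑ j, Complex.normSq (V j k) * d j := by
  rw [mul_apply, Complex.re_sum]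
  refine Finset.sum_congr rfl fun j _ => ?_
  rw [mul_diagonal, star_apply, mul_right_comm, RCLike.star_def, ← Complex.normSq_eq_conj_mul_self,
    Function.comp_apply]
  simp

lemma sum_normSq_apply_left_eq_one {V : Matrix n n ℂ} (hV : V ∈ unitaryGroup n ℂ) (k : n) :
    ∑ j, Complex.normSq (V j k) = 1 := by
  have h := re_star_mul_diagonal_mul_apply_self V 1 k
  simp only [Pi.one_apply, mul_one] at h
  rw [← h]
  simp [mem_unitaryGroup_iff'.mp hV]

lemma sum_normSq_apply_right_eq_one {V : Matrix n n ℂ} (hV : V ∈ unitaryGroup n ℂ) (j : n) :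
    ∑ k, Complex.normSq (V j k) = 1 := by
  simpa using sum_normSq_apply_left_eq_one (Unitary.star_mem hV) j

/-- Peierls' inequality: with `V = W⋆U` for the eigenvector matrix `W` of `A`, the weights
`|V j k|²` form a doubly stochastic matrix, and Jensen applies to each diagonal entry. -/
lemma Matrix.IsHermitian.sum_le_sum_re_diag {f : ℝ → ℝ} {s : Set ℝ} (hf : ConcaveOn ℝ s f)
    {A : Matrix n n ℂ} (hA : A.IsHermitian) (hs : ∀ j, hA.eigenvalues j ∈ s)
    {U : Matrix n n ℂ} (hU : U ∈ unitaryGroup n ℂ) :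
    ∑ j, f (hA.eigenvalues j) ≤ ∑ k, f ((star U * A * U) k k).re := by
  set W : Matrix n n ℂ := (hA.eigenvectorUnitary : Matrix n n ℂ)
  set V : Matrix n n ℂ := star W * U
  have hV : V ∈ unitaryGroup n ℂ := mul_mem (Unitary.star_mem hA.eigenvectorUnitary.2) hU
  have hdiag (k : n) :
      ((star U * A * U) k k).re = ∑ j, Complex.normSq (V j k) * hA.eigenvalues j := by
    rw [← re_star_mul_diagonal_mul_apply_self]
    conv_lhs => rw [hA.spectral_theorem, Unitary.conjStarAlgAut_apply]
    simp only [V, star_mul, star_star, Matrix.mul_assoc]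
    rfl
  calc ∑ j, f (hA.eigenvalues j)
      = ∑ j, (∑ k, Complex.normSq (V j k)) * f (hA.eigenvalues j) := by
        simp [sum_normSq_apply_right_eq_one hV]
    _ = ∑ k, ∑ j, Complex.normSq (V j k) * f (hA.eigenvalues j) := by
        rw [Finset.sum_comm]
        simp [Finset.sum_mul]
    _ ≤ ∑ k, f (∑ j, Complex.normSq (V j k) * hA.eigenvalues j) :=
        Finset.sum_le_sum fun k _ => by
          simpa using hf.le_map_sum (fun j _ => Complex.normSq_nonneg _)
            (sum_normSq_apply_left_eq_one hV k) (fun j _ => hs j)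
    _ = ∑ k, f ((star U * A * U) k k).re := by simp_rw [hdiag]

end Unitary

section VonNeumannEntropy

variable {n : Type*} [Fintype n] [DecidableEq n]

lemma Matrix.IsHermitian.re_trace_cfc {A : Matrix n n ℂ} (hA : A.IsHermitian) (f : ℝ → ℝ) :
    (cfc f A).trace.re = ∑ i, f (hA.eigenvalues i) := by
  rw [hA.cfc_eq, IsHermitian.cfc, Unitary.conjStarAlgAut_apply, trace_mul_cycle,
    Unitary.coe_star_mul_self, one_mul, trace_diagonal, Complex.re_sum]
  rfl

lemma vnEntropy_of_isHermitian {A : Matrix n n ℂ} (hA : A.IsHermitian) :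
    vnEntropy A = (cfc negxlog A).trace.re := by
  rw [vnEntropy, dif_pos hA, hA.re_trace_cfc]

lemma vnEntropy_zero : vnEntropy (0 : Matrix n n ℂ) = 0 := by
  rw [vnEntropy, dif_pos isHermitian_zero, isHermitian_zero.eigenvalues_eq_zero_iff.mpr rfl]
  simp [negxlog]

lemma mul_vnEntropy_inv_smul {A : Matrix n n ℂ} (hA : A.IsHermitian) {p : ℝ} (hp : 0 < p) :
    p * vnEntropy (p⁻¹ • A) = vnEntropy A + Real.logb 2 p * A.trace.re := by
  rw [vnEntropy_of_isHermitian (hA.smul (IsSelfAdjoint.all _)), vnEntropy_of_isHermitian hA,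
    ← cfc_comp_const_mul p⁻¹ negxlog A (continuous_negxlog.continuousOn), hA.re_trace_cfc,
    hA.re_trace_cfc, hA.trace_eq_sum_eigenvalues, Complex.re_sum, Finset.mul_sum, Finset.mul_sum,
    ← Finset.sum_add_distrib]
  simp [mul_negxlog_inv_mul hp]

lemma concaveOn_vnEntropy : ConcaveOn ℝ {A : Matrix n n ℂ | A.PosSemidef} vnEntropy := by
  refine ⟨convex_setOf_posSemidef, fun A hA B hB a b ha hb hab => ?_⟩
  have hC : (a • A + b • B).PosSemidef := convex_setOf_posSemidef hA hB ha hb hab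
  set U : Matrix n n ℂ := (hC.isHermitian.eigenvectorUnitary : Matrix n n ℂ)
  have hU : U ∈ unitaryGroup n ℂ := hC.isHermitian.eigenvectorUnitary.2
  set q : Matrix n n ℂ → n → ℝ := fun X k => ((star U * X * U) k k).re
  have hq {X : Matrix n n ℂ} (hX : X.PosSemidef) (k : n) : 0 ≤ q X k := by
    simpa [q, star_eq_conjTranspose] using (hX.conjTranspose_mul_mul_same U).re_apply_self_nonneg k
  have heig (k : n) : hC.isHermitian.eigenvalues k = a * q A k + b * q B k := by
    have h := congrArg (fun X : Matrix n n ℂ => (X k k).re)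
      hC.isHermitian.conjStarAlgAut_star_eigenvectorUnitary
    simp only [Unitary.conjStarAlgAut_star_apply, diagonal_apply_eq, Function.comp_apply,
      Complex.coe_algebraMap, Complex.ofReal_re] at h
    rw [← h]
    simp only [q, Matrix.mul_add, Matrix.add_mul, Matrix.mul_smul, Matrix.smul_mul,
      Matrix.add_apply, Matrix.smul_apply, Complex.add_re, Complex.smul_re, smul_eq_mul]
    rfl
  calc a • vnEntropy A + b • vnEntropy B
      ≤ a * ∑ k, negxlog (q A k) + b * ∑ k, negxlog (q B k) := by
        rw [vnEntropy, dif_pos hA.isHermitian, vnEntropy, dif_pos hB.isHermitian, smul_eq_mul,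
          smul_eq_mul]
        exact add_le_add
          (mul_le_mul_of_nonneg_left
            (hA.isHermitian.sum_le_sum_re_diag concaveOn_negxlog hA.eigenvalues_nonneg hU) ha)
          (mul_le_mul_of_nonneg_left
            (hB.isHermitian.sum_le_sum_re_diag concaveOn_negxlog hB.eigenvalues_nonneg hU) hb)
    _ = ∑ k, (a • negxlog (q A k) + b • negxlog (q B k)) := by
        simp [Finset.sum_add_distrib, Finset.mul_sum]
    _ ≤ ∑ k, negxlog (a • q A k + b • q B k) := Finset.sum_le_sum fun k _ =>
        concaveOn_negxlog.2 (hq hA k) (hq hB k) ha hb hab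
    _ = vnEntropy (a • A + b • B) := by
        rw [vnEntropy, dif_pos hC.isHermitian]
        simp [heig]

open scoped Matrix.Norms.L2Operator in
lemma continuousOn_vnEntropy : ContinuousOn vnEntropy {A : Matrix n n ℂ | A.IsHermitian} := by
  have hcfc : ContinuousOn (cfc negxlog) {A : Matrix n n ℂ | IsSelfAdjoint A} :=
    ContinuousOn.cfc_of_mem_nhdsSet (𝕜 := ℝ) negxlog (a := id) (s := Set.univ) Filter.univ_mem
      continuousOn_id (fun _ hA => hA) continuous_negxlog.continuousOn
  refine ((Complex.continuous_re.comp_continuousOn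
    (continuous_id.matrix_trace.comp_continuousOn hcfc))).congr fun A hA => ?_
  exact vnEntropy_of_isHermitian hA

lemma perspective_reTrace_vnEntropy {X : Matrix n n ℂ} (hX : X.PosSemidef) :
    perspective (reTrace n) vnEntropy X = vnEntropy X - negxlog (reTrace n X) := by
  rw [perspective, reTrace_apply]
  rcases hX.re_trace_nonneg.eq_or_lt with hp | hp
  · rw [hX.eq_zero_of_re_trace_eq_zero hp.symm]
    simp [vnEntropy_zero, negxlog]
  · rw [mul_vnEntropy_inv_smul hX.isHermitian hp, negxlog]
    ring

lemma concaveOn_perspective_vnEntropy :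
    ConcaveOn ℝ {X : Matrix n n ℂ | X.PosSemidef} (perspective (reTrace n) vnEntropy) :=
  concaveOn_perspective concaveOn_vnEntropy _ (fun _ hX _ hc => hX.smul hc)
    (fun _ hX => hX.re_trace_nonneg) (fun _ hX => hX.eq_zero_of_re_trace_eq_zero)

open scoped Matrix.Norms.L2Operator in
lemma continuousOn_perspective_vnEntropy :
    ContinuousOn (perspective (reTrace n) vnEntropy) {X : Matrix n n ℂ | X.PosSemidef} :=
  ((continuousOn_vnEntropy.mono fun _ hX => hX.isHermitian).sub
    (continuous_negxlog.comp (reTrace n).continuous_of_finiteDimensional).continuousOn).congr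
    fun _ hX => perspective_reTrace_vnEntropy hX

end VonNeumannEntropy

section POVMSet

variable {β ι : Type*} [Fintype β] [DecidableEq β] [Fintype ι]

lemma convex_setOf_isPOVM : Convex ℝ {M : ι → Matrix β β ℂ | IsPOVM M} := by
  rintro M ⟨hM0, hM1⟩ N ⟨hN0, hN1⟩ a b ha hb hab
  refine ⟨fun i => ((hM0 i).smul ha).add ((hN0 i).smul hb), ?_⟩
  simp only [Pi.add_apply, Pi.smul_apply, Finset.sum_add_distrib, ← Finset.smul_sum, hM1, hN1,
    ← add_smul, hab, one_smul]

lemma setOf_isPOVM_nonempty [Nonempty ι] : {M : ι → Matrix β β ℂ | IsPOVM M}.Nonempty := by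
  refine ⟨fun _ => (Fintype.card ι : ℝ)⁻¹ • 1, fun _ => PosSemidef.one.smul (by positivity), ?_⟩
  rw [Finset.sum_const, Finset.card_univ, ← Nat.cast_smul_eq_nsmul ℝ, smul_smul,
    mul_inv_cancel₀ (by exact_mod_cast Fintype.card_ne_zero), one_smul]

open scoped MatrixOrder Matrix.Norms.L2Operator in
lemma isCompact_setOf_isPOVM : IsCompact {M : ι → Matrix β β ℂ | IsPOVM M} := by
  have hclosed : IsClosed {M : ι → Matrix β β ℂ | IsPOVM M} := by
    simp only [IsPOVM, Set.ofPred_and, Set.ofPred_forall, ← nonneg_iff_posSemidef]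
    exact (isClosed_iInter fun i => isClosed_le continuous_const (continuous_apply i)).inter
      (isClosed_eq (continuous_finsetSum _ fun i _ => continuous_apply i) continuous_const)
  refine Metric.isCompact_of_isClosed_isBounded hclosed
    ((Metric.isBounded_closedBall (x := 0) (r := ‖(1 : Matrix β β ℂ)‖)).subset fun M hM => ?_)
  rw [mem_closedBall_zero_iff, pi_norm_le_iff_of_nonneg (norm_nonneg _)]
  intro i
  refine CStarAlgebra.norm_le_norm_of_nonneg_of_le (hM.1 i).nonneg ?_
  rw [← hM.2]
  exact Finset.single_le_sum (fun j _ => (hM.1 j).nonneg) (Finset.mem_univ i)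

end POVMSet

section MeasuredEntropy

variable {α β : Type*} [Fintype α] [Fintype β] [DecidableEq α] [DecidableEq β]

noncomputable def povmCondOp (ρ : Matrix (α × β) (α × β) ℂ) :
    Matrix β β ℂ →ₗ[ℝ] Matrix α α ℂ where
  toFun M := trB (ρ * ((1 : Matrix α α ℂ) ⊗ₖ M))
  map_add' M N := by
    ext i j
    simp [trB, kronecker_add, Matrix.mul_add, Finset.sum_add_distrib]
  map_smul' c M := by
    ext i j
    simp [trB, kronecker_smul, Finset.smul_sum]

/-- The operator `I_A ⊗ |B̄ m⟩ : H_A → H_A ⊗ H_B`, where `B̄ m` is the conjugated `m`-th row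
of `B`. -/
def krausOp (α : Type*) [DecidableEq α] (B : Matrix β β ℂ) (m : β) : Matrix (α × β) α ℂ :=
  of fun p i => if p.1 = i then star (B m p.2) else 0

omit [DecidableEq β] in
lemma trB_mul_one_kronecker_conjTranspose_mul_self (Z : Matrix (α × β) (α × β) ℂ)
    (B : Matrix β β ℂ) :
    trB (Z * ((1 : Matrix α α ℂ) ⊗ₖ (Bᴴ * B))) = ∑ m, (krausOp α B m)ᴴ * Z * krausOp α B m := by
  ext i i'
  simp only [trB, krausOp, mul_apply, Fintype.sum_prod_type, kroneckerMap_apply, one_apply,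
    conjTranspose_apply, Matrix.sum_apply, of_apply, RCLike.star_def, apply_ite (starRingEnd ℂ),
    RingHomCompTriple.comp_apply, RingHom.id_apply, map_zero, ite_mul, mul_ite, one_mul, zero_mul,
    mul_zero, Finset.sum_ite_irrel, Finset.sum_const_zero, Finset.sum_ite_eq', Finset.mem_univ,
    if_true, Finset.mul_sum, Finset.sum_mul]
  conv_rhs => enter [2, m]; rw [Finset.sum_comm]
  conv_rhs => rw [Finset.sum_comm]
  refine Finset.sum_congr rfl fun k _ => ?_
  rw [Finset.sum_comm]
  refine Finset.sum_congr rfl fun m _ => Finset.sum_congr rfl fun l _ => ?_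
  ring

open scoped MatrixOrder in
lemma Matrix.PosSemidef.povmCondOp {ρ : Matrix (α × β) (α × β) ℂ} (hρ : ρ.PosSemidef)
    {M : Matrix β β ℂ} (hM : M.PosSemidef) : (povmCondOp ρ M).PosSemidef := by
  obtain ⟨B, rfl⟩ := CStarAlgebra.nonneg_iff_eq_star_mul_self.mp hM.nonneg
  change (trB (ρ * ((1 : Matrix α α ℂ) ⊗ₖ (Bᴴ * B)))).PosSemidef
  rw [trB_mul_one_kronecker_conjTranspose_mul_self]
  exact posSemidef_sum _ fun m _ => hρ.conjTranspose_mul_mul_same _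

variable {ι : Type*} [Fintype ι] {ρ : Matrix (α × β) (α × β) ℂ}

lemma povmMCE_eq_sum_perspective (ρ : Matrix (α × β) (α × β) ℂ) :
    povmMCE ρ = fun M : ι → Matrix β β ℂ =>
      ∑ i, perspective (reTrace α) vnEntropy (povmCondOp ρ (M i)) :=
  rfl

lemma concaveOn_povmMCE (hρ : ρ.PosSemidef) :
    ConcaveOn ℝ {M : ι → Matrix β β ℂ | IsPOVM M} (povmMCE ρ) := by
  have hterm (i : ι) : ConcaveOn ℝ {M : ι → Matrix β β ℂ | IsPOVM M}
      (fun M => perspective (reTrace α) vnEntropy (povmCondOp ρ (M i))) := by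
    have h := concaveOn_perspective_vnEntropy.comp_linearMap
      ((povmCondOp ρ).comp (LinearMap.proj (R := ℝ) (φ := fun _ : ι => Matrix β β ℂ) i))
    exact h.subset (fun M hM => hρ.povmCondOp (hM.1 i)) convex_setOf_isPOVM
  rw [povmMCE_eq_sum_perspective]
  exact ConcaveOn.sum convex_setOf_isPOVM fun i _ => hterm i

open scoped Matrix.Norms.L2Operator in
lemma continuousOn_povmMCE (hρ : ρ.PosSemidef) :
    ContinuousOn (povmMCE ρ) {M : ι → Matrix β β ℂ | IsPOVM M} := by
  have hterm (i : ι) : ContinuousOn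
      (fun M : ι → Matrix β β ℂ => perspective (reTrace α) vnEntropy (povmCondOp ρ (M i)))
      {M | IsPOVM M} :=
    continuousOn_perspective_vnEntropy.comp
      ((povmCondOp ρ).continuous_of_finiteDimensional.comp (continuous_apply i)).continuousOn
      fun _ hM => hρ.povmCondOp (hM.1 i)
  rw [povmMCE_eq_sum_perspective]
  exact continuousOn_finsetSum _ fun i _ => hterm i

open scoped Matrix.Norms.L2Operator in
lemma exists_mem_extremePoints_isMinOn_povmMCE [Nonempty ι] (hρ : ρ.PosSemidef) :
    ∃ M ∈ Set.extremePoints ℝ {M : ι → Matrix β β ℂ | IsPOVM M},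
      IsMinOn (povmMCE ρ) {M | IsPOVM M} M :=
  (concaveOn_povmMCE hρ).exists_mem_extremePoints_isMinOn (continuousOn_povmMCE hρ)
    isCompact_setOf_isPOVM setOf_isPOVM_nonempty

end MeasuredEntropy

/-- the measured conditional entropy is concave on the convex set of POVMs,
hence its minimum is attained at an extreme point. -/
theorem measured_condEnt_concave_min_at_extreme
    {α β ι : Type*} [Fintype α] [Fintype β] [Fintype ι] [Nonempty ι]
    [DecidableEq α] [DecidableEq β]
    (ρ : Matrix (α × β) (α × β) ℂ) (hρ : IsDensity ρ) :
    (∀ M N : ι → Matrix β β ℂ, IsPOVM M → IsPOVM N → ∀ t : ℝ, 0 ≤ t → t ≤ 1 →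
      t * povmMCE ρ M + (1 - t) * povmMCE ρ N ≤
        povmMCE ρ (fun i => t • M i + (1 - t) • N i)) ∧
    ∃ M ∈ Set.extremePoints ℝ {M : ι → Matrix β β ℂ | IsPOVM M},
      ∀ N : ι → Matrix β β ℂ, IsPOVM N → povmMCE ρ M ≤ povmMCE ρ N :=
  ⟨fun _ _ hM hN t ht0 ht1 => (concaveOn_povmMCE hρ.1).2 hM hN ht0 (sub_nonneg.2 ht1) (by ring),
    exists_mem_extremePoints_isMinOn_povmMCE hρ.1⟩
end
end
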